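/- In the general reduction graph G, any feasible bootstrap solution S can be transformed into a feasible bootstrap solution S' with |S'| ≤ |S| containing only red and white vertices, and then S' ∩ V_H is a feasible solution to the DVD instance (L, H). Consequently, the optimum of the DVD instance (L, H) equals the optimum of the bootstrap instance (L, G), so the reduction is approximation-preserving. -/

import Mathlib

/-!
Replacing a blue vertex `w_i^{(v)}` of a bootstrap solution by `v` keeps it feasible, by
induction on the length of interesting paths: if `w_i^{(v)}` hits a path `p` that `v` does not
hit, then `p` ends in `v` after a blue tail, and cutting `p` before that tail and closing it
with a clone gives a shorter interesting path whose non-final vertices are non-final in `p`.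

Interesting paths and `L`-vertex paths of `H` correspond: the original vertices met by an
interesting path before its last red vertex form a path of `H`, and conversely a path of `H`
lifts to `G` through the blue chains and is closed by the clone of its last vertex. For a
solution without blue vertices, only the original vertices on such a lift can be hit. Hence
blue-free bootstrap solutions restrict to DVD solutions and DVD solutions are bootstrap
solutions, which gives the equality of the optima.
-/

/-- Colors of vertices in the circuit DAG. -/
inductive Color where
  | white | blue | red
deriving DecidableEq

/-- Number of red vertices on a path (given as a list of vertices). -/
def redCount {V : Type*} (color : V → Color) (p : List V) : ℕ :=
  (p.filter (fun v => decide (color v = Color.red))).length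

/-- `p` is an interesting path: it starts and ends at red vertices and traverses exactly
`L+1` red vertices. -/
def IntPath {V : Type*} (E : V → V → Prop) (color : V → Color) (L : ℕ) (p : List V) : Prop :=
  ∃ hp : p ≠ [], p.Chain' E ∧ color (p.head hp) = Color.red ∧
    color (p.getLast hp) = Color.red ∧ redCount color p = L + 1

variable {α : Type*} [Fintype α] [DecidableEq α]

/-- Indegree of a vertex of `H`. -/
def windeg (EH : α → α → Prop) [DecidableRel EH] (v : α) : ℕ :=
  (Finset.univ.filter (fun u => EH u v)).card

/-- Vertex set of the general reduction graph `G`: original vertices `V_H`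
(`.inl (.inl v)`, red), clones `V_H'` (`.inl (.inr v)`, red), the white source `s₀`
(`.inr (.inl ())`), and the auxiliary blue chain vertices `w_i^{(v)}`
(`.inr (.inr ⟨v, i⟩)`, used when `indegree(v) ≥ 3`). -/
abbrev GVt (α : Type*) [Fintype α] [DecidableEq α]
    (EH : α → α → Prop) [DecidableRel EH] :=
  (α ⊕ α) ⊕ (Unit ⊕ (Σ v : α, Fin (windeg EH v)))

/-- Colors in the general reduction graph. -/
def gcolor (EH : α → α → Prop) [DecidableRel EH] : GVt α EH → Color
  | .inl _ => Color.red
  | .inr (.inl _) => Color.white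
  | .inr (.inr _) => Color.blue

/-- Edges of the general reduction graph `G` built from `H` using, for each `v`, an
enumeration `ord v` of the predecessors of `v`: edges of `H` going into vertices of indegree
at most 2, edges `v → v'` to the clones, edges `s₀ → v` for indegree at most 1, and, for each
`v` of indegree `d ≥ 3`, the blue chain `w₀^{(v)} → ⋯ → w_{d-1}^{(v)} → v` together with the
edges `(ord v i) → w_i^{(v)}` (parallel multiplicities are irrelevant for paths). -/
def GE (EH : α → α → Prop) [DecidableRel EH]
    (ord : ∀ v : α, Fin (windeg EH v) ≃ {u : α // EH u v}) :
    GVt α EH → GVt α EH → Prop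
  | .inl (.inl u), .inl (.inl v) => EH u v ∧ windeg EH v ≤ 2
  | .inl (.inl u), .inl (.inr v) => u = v
  | .inr (.inl _), .inl (.inl v) => windeg EH v ≤ 1
  | .inl (.inl u), .inr (.inr ⟨v, i⟩) => 3 ≤ windeg EH v ∧ ((ord v i : {u : α // EH u v}) : α) = u
  | .inr (.inr ⟨v, i⟩), .inr (.inr ⟨v', j⟩) =>
      3 ≤ windeg EH v ∧ v = v' ∧ (i : ℕ) + 1 = (j : ℕ)
  | .inr (.inr ⟨v, i⟩), .inl (.inl v') =>
      3 ≤ windeg EH v ∧ v = v' ∧ (i : ℕ) + 1 = windeg EH v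
  | _, _ => False


section General

variable {V : Type*}

theorem List.exists_eq_append_cons_of_getLast {P : V → Prop} :
    ∀ {l : List V} (hl : l ≠ []), P (l.getLast hl) → (∃ y ∈ l, ¬ P y) →
      ∃ pre x suf, l = pre ++ x :: suf ∧ ¬ P x ∧ suf ≠ [] ∧ ∀ y ∈ suf, P y
  | [], hl, _, _ => absurd rfl hl
  | x :: t, _, hlast, ⟨y, hy, hPy⟩ => by
    by_cases ht : ∃ y ∈ t, ¬ P y
    · have htne : t ≠ [] := by rintro rfl; simp at ht
      obtain ⟨pre, r, suf, rfl, hr, hsuf, hP⟩ :=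
        exists_eq_append_cons_of_getLast htne (by rwa [List.getLast_cons htne] at hlast) ht
      exact ⟨x :: pre, r, suf, rfl, hr, hsuf, hP⟩
    · push Not at ht
      have hx : ¬ P x := by
        rcases List.mem_cons.1 hy with rfl | hy
        exacts [hPy, absurd (ht y hy) hPy]
      have htne : t ≠ [] := by rintro rfl; exact hx hlast
      exact ⟨[], x, t, rfl, hx, htne, ht⟩

theorem redCount_append (c : V → Color) (a b : List V) :
    redCount c (a ++ b) = redCount c a + redCount c b := by
  simp [redCount, List.filter_append]

@[simp]
theorem redCount_cons (c : V → Color) (x : V) (l : List V) :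
    redCount c (x :: l) = redCount c l + if c x = Color.red then 1 else 0 := by
  by_cases h : c x = Color.red <;> simp [redCount, h]

@[simp]
theorem redCount_nil (c : V → Color) : redCount c [] = 0 := rfl

theorem redCount_eq_zero {c : V → Color} {l : List V} (h : ∀ x ∈ l, c x ≠ Color.red) :
    redCount c l = 0 := by
  simpa [redCount, List.filter_eq_nil_iff] using h

def IsBootstrapSolution (E : V → V → Prop) (color : V → Color) (L : ℕ) (T : Finset V) :
    Prop :=
  ∀ p, IntPath E color L p → ∃ z ∈ p.dropLast, z ∈ T

def IsDVDSolution (E : V → V → Prop) (L : ℕ) (D : Finset V) : Prop :=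
  ∀ q : List V, q.IsChain E → q.length = L → ∃ u ∈ q, u ∈ D

theorem IsBootstrapSolution.image_of_exists_shorter [DecidableEq V] {E : V → V → Prop}
    {color : V → Color} {L : ℕ} {S : Finset V} (hS : IsBootstrapSolution E color L S)
    (f : V → V)
    (hshort : ∀ p, IntPath E color L p → ∀ z ∈ p.dropLast, f z ∉ p.dropLast →
      ∃ q, IntPath E color L q ∧ q.length < p.length ∧ q.dropLast ⊆ p.dropLast) :
    IsBootstrapSolution E color L (S.image f) := by
  intro p hp
  induction hn : p.length using Nat.strong_induction_on generalizing p with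
  | _ n ih =>
    obtain ⟨z, hz, hzS⟩ := hS p hp
    by_cases hfz : f z ∈ p.dropLast
    · exact ⟨f z, hfz, Finset.mem_image_of_mem f hzS⟩
    · obtain ⟨q, hq, hlt, hsub⟩ := hshort p hp z hz hfz
      obtain ⟨y, hy, hyS⟩ := ih _ (hn ▸ hlt) q hq rfl
      exact ⟨y, hsub hy, hyS⟩

theorem Nat.sInf_eq_of_forall_exists_le {A B : Set ℕ} (hAB : ∀ n ∈ A, ∃ m ∈ B, m ≤ n)
    (hBA : ∀ n ∈ B, ∃ m ∈ A, m ≤ n) : sInf A = sInf B := by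
  rcases A.eq_empty_or_nonempty with rfl | hA
  · have hB : B = ∅ := Set.eq_empty_of_forall_notMem fun n hn => by
      obtain ⟨m, hm, -⟩ := hBA n hn
      exact hm
    rw [hB]
  obtain ⟨n₀, hn₀⟩ := hA
  obtain ⟨m₀, hm₀, -⟩ := hAB n₀ hn₀
  apply le_antisymm
  · obtain ⟨m, hm, hle⟩ := hBA _ (Nat.sInf_mem ⟨m₀, hm₀⟩)
    exact (Nat.sInf_le hm).trans hle
  · obtain ⟨m, hm, hle⟩ := hAB _ (Nat.sInf_mem ⟨n₀, hn₀⟩)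
    exact (Nat.sInf_le hm).trans hle

end General

section ReductionGraph

variable {EH : α → α → Prop} [DecidableRel EH]
  {ord : ∀ v : α, Fin (windeg EH v) ≃ {u : α // EH u v}} {L : ℕ}

theorem not_GE_clone (u : α) (y : GVt α EH) : ¬ GE EH ord (.inl (.inr u)) y := by
  rcases y with (_ | _) | (_ | _) <;> simp [GE]

theorem eq_nil_of_isChain_clone {u : α} {t : List (GVt α EH)}
    (h : (.inl (.inr u) :: t).IsChain (GE EH ord)) : t = [] := by
  rcases t with _ | ⟨y, t⟩
  · rfl
  · exact absurd (List.isChain_cons_cons.1 h).1 (not_GE_clone u y)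

theorem GE_blue_left {v : α} {i : Fin (windeg EH v)} {y : GVt α EH}
    (h : GE EH ord (.inr (.inr ⟨v, i⟩)) y) :
    y = .inl (.inl v) ∨ ∃ j, y = .inr (.inr ⟨v, j⟩) := by
  rcases y with (w | w) | (w | ⟨v', j⟩) <;> simp only [GE] at h
  · obtain ⟨-, rfl, -⟩ := h; exact .inl rfl
  · obtain ⟨-, rfl, -⟩ := h; exact .inr ⟨j, rfl⟩

theorem GE_blue_right {v : α} {i : Fin (windeg EH v)} {x : GVt α EH}
    (h : GE EH ord x (.inr (.inr ⟨v, i⟩))) :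
    (∃ u, x = .inl (.inl u)) ∨ ∃ j, x = .inr (.inr ⟨v, j⟩) := by
  rcases x with (u | u) | (u | ⟨v', j⟩) <;> simp only [GE] at h
  · exact .inl ⟨u, rfl⟩
  · obtain ⟨-, rfl, -⟩ := h; exact .inr ⟨j, rfl⟩

theorem GE_orig_left {u : α} {y : GVt α EH} (h : GE EH ord (.inl (.inl u)) y) :
    y = .inl (.inr u) ∨
      ∃ v, EH u v ∧ (y = .inl (.inl v) ∨ ∃ j, y = .inr (.inr ⟨v, j⟩)) := by
  rcases y with (w | w) | (w | ⟨v, j⟩) <;> simp only [GE] at h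
  · exact .inr ⟨w, h.1, .inl rfl⟩
  · exact .inl (h ▸ rfl)
  · exact .inr ⟨v, h.2 ▸ (ord v j).2, .inr ⟨j, rfl⟩⟩

theorem isChain_blue_cons_cases {v : α} {i : Fin (windeg EH v)} {l : List (GVt α EH)}
    (h : (.inr (.inr ⟨v, i⟩) :: l).IsChain (GE EH ord)) :
    (∀ x ∈ l, gcolor EH x = Color.blue) ∨
      ∃ c d, l = c ++ .inl (.inl v) :: d ∧ ∀ x ∈ c, gcolor EH x = Color.blue := by
  induction l generalizing i with
  | nil => exact .inl (by simp)
  | cons y t ih =>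
    obtain ⟨hy, ht⟩ := List.isChain_cons_cons.1 h
    rcases GE_blue_left hy with rfl | ⟨j, rfl⟩
    · exact .inr ⟨[], t, rfl, by simp⟩
    · rcases ih ht with hblue | ⟨c, d, rfl, hc⟩
      · exact .inl (by simpa [gcolor] using hblue)
      · exact .inr ⟨_ :: c, d, rfl, by simpa [gcolor] using hc⟩

theorem exists_eq_of_gcolor_eq_blue {x : GVt α EH} (h : gcolor EH x = Color.blue) :
    ∃ v i, x = .inr (.inr ⟨v, i⟩) := by
  rcases x with (_ | _) | (_ | ⟨v, i⟩) <;> simp_all [gcolor]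

theorem exists_orig_before_blue_suffix {l : List (GVt α EH)} (hl : l ≠ [])
    (hch : l.IsChain (GE EH ord)) (hlast : gcolor EH (l.getLast hl) = Color.blue)
    (hex : ∃ y ∈ l, gcolor EH y ≠ Color.blue) :
    ∃ pre u s, l = pre ++ .inl (.inl u) :: s ∧ s ≠ [] ∧
      ∀ y ∈ s, gcolor EH y = Color.blue := by
  obtain ⟨pre, x, s, rfl, hx, hs, hblue⟩ := List.exists_eq_append_cons_of_getLast hl hlast hex
  obtain ⟨y, s, rfl⟩ := List.exists_cons_of_ne_nil hs
  obtain ⟨v, j, rfl⟩ := exists_eq_of_gcolor_eq_blue (hblue y (by simp))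
  have hxy : GE EH ord x (.inr (.inr ⟨v, j⟩)) :=
    (List.isChain_cons_cons.1 (hch.infix (l₁ := x :: _ :: s) ⟨pre, [], by simp⟩)).1
  rcases GE_blue_right hxy with ⟨u, rfl⟩ | ⟨j', rfl⟩
  · exact ⟨pre, u, _, rfl, hs, hblue⟩
  · exact absurd rfl hx

def unblue : GVt α EH → GVt α EH
  | .inr (.inr ⟨v, _⟩) => .inl (.inl v)
  | x => x

theorem gcolor_unblue_ne_blue (x : GVt α EH) : gcolor EH (unblue x) ≠ Color.blue := by
  rcases x with (_ | _) | (_ | _) <;> simp [unblue, gcolor]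

theorem IntPath.cut_before_blue {pre s : List (GVt α EH)} {u : α} {x : GVt α EH}
    (hp : IntPath (GE EH ord) (gcolor EH) L (pre ++ .inl (.inl u) :: s ++ [x]))
    (hs : ∀ y ∈ s, gcolor EH y = Color.blue) :
    IntPath (GE EH ord) (gcolor EH) L (pre ++ [.inl (.inl u), .inl (.inr u)]) := by
  obtain ⟨hne, hch, hhead, hlast, hcount⟩ := hp
  have hs0 : redCount (gcolor EH) s = 0 := redCount_eq_zero fun y hy => by simp [hs y hy]
  have hx : gcolor EH x = Color.red := by simpa using hlast
  refine ⟨by simp, ?_, ?_, by simp [gcolor], ?_⟩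
  · have hpre : (pre ++ [(.inl (.inl u) : GVt α EH)]).IsChain (GE EH ord) :=
      hch.infix ⟨[], s ++ [x], by simp⟩
    rw [← List.singleton_append, ← List.append_assoc]
    exact hpre.append_overlap (List.isChain_pair.2 rfl) (List.cons_ne_nil _ _)
  · rcases pre with _ | ⟨y, pre⟩ <;> simp_all [gcolor]
  · simp only [redCount_append, redCount_cons, redCount_nil, hs0, hx] at hcount ⊢
    simp [gcolor] at hcount ⊢
    omega

theorem exists_shorter_intPath {p : List (GVt α EH)}
    (hp : IntPath (GE EH ord) (gcolor EH) L p) {z : GVt α EH} (hz : z ∈ p.dropLast)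
    (hzu : unblue z ∉ p.dropLast) :
    ∃ q, IntPath (GE EH ord) (gcolor EH) L q ∧ q.length < p.length ∧
      q.dropLast ⊆ p.dropLast := by
  obtain ⟨init, x, rfl⟩ := (List.eq_nil_or_concat' p).resolve_left hp.1
  have ⟨_, hch, hhead, _⟩ := hp
  rw [List.dropLast_concat] at hz hzu ⊢
  obtain ⟨v, i, rfl⟩ : ∃ v i, z = .inr (.inr ⟨v, i⟩) := by
    rcases z with (_ | _) | (_ | ⟨v, i⟩)
    all_goals first | exact ⟨v, i, rfl⟩ | exact absurd hz hzu
  obtain ⟨a, b, rfl⟩ := List.append_of_mem hz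
  have hblue :
      ∀ y ∈ (.inr (.inr ⟨v, i⟩) :: b : List (GVt α EH)), gcolor EH y = Color.blue := by
    refine List.forall_mem_cons.2 ⟨rfl, ?_⟩
    refine (isChain_blue_cons_cases (hch.infix ⟨a, [x], rfl⟩)).resolve_right ?_
    rintro ⟨c, d, rfl, -⟩
    exact hzu (by simp [unblue])
  have hinit : a ++ .inr (.inr ⟨v, i⟩) :: b ≠ [] := by simp
  obtain ⟨pre, u, s, hsplit, hs, hsblue⟩ := exists_orig_before_blue_suffix hinit
    hch.left_of_append
    (by rw [List.getLast_append_of_ne_nil _ (List.cons_ne_nil _ _)]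
        exact hblue _ (List.getLast_mem _))
    ⟨_, List.head_mem hinit, by rw [List.IsPrefix.head ⟨[x], rfl⟩ hinit, hhead]; simp⟩
  rw [hsplit] at hp ⊢
  refine ⟨_, hp.cut_before_blue hsblue, ?_, by simp⟩
  simp [List.length_pos_iff.2 hs]

theorem exists_blue_run {v : α} (hd : 3 ≤ windeg EH v) :
    ∀ (k : ℕ) (i : Fin (windeg EH v)), (i : ℕ) + k + 1 = windeg EH v →
      ∃ c : List (GVt α EH), (∀ x ∈ c, gcolor EH x = Color.blue) ∧
        ((.inr (.inr ⟨v, i⟩) : GVt α EH) :: c ++ [(.inl (.inl v) : GVt α EH)]).IsChain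
          (GE EH ord)
  | 0, i, hi => ⟨[], by simp, List.isChain_pair.2 ⟨hd, rfl, by omega⟩⟩
  | k + 1, i, hi => by
    obtain ⟨c, hc, hch⟩ := exists_blue_run hd k ⟨i + 1, by omega⟩ (by simp; omega)
    exact ⟨.inr (.inr ⟨v, ⟨i + 1, by omega⟩⟩) :: c, List.forall_mem_cons.2 ⟨rfl, hc⟩,
      List.isChain_cons_cons.2 ⟨⟨hd, rfl, rfl⟩, hch⟩⟩

theorem exists_blue_connector {u v : α} (h : EH u v) :
    ∃ c : List (GVt α EH), (∀ x ∈ c, gcolor EH x = Color.blue) ∧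
      ((.inl (.inl u) : GVt α EH) :: c ++ [(.inl (.inl v) : GVt α EH)]).IsChain
        (GE EH ord) := by
  by_cases hd : windeg EH v ≤ 2
  · exact ⟨[], by simp, List.isChain_pair.2 ⟨h, hd⟩⟩
  · set i := (ord v).symm ⟨u, h⟩
    obtain ⟨c, hc, hch⟩ := exists_blue_run (ord := ord) (by omega) (windeg EH v - i - 1) i
      (by omega)
    exact ⟨.inr (.inr ⟨v, i⟩) :: c, List.forall_mem_cons.2 ⟨rfl, hc⟩,
      List.isChain_cons_cons.2 ⟨⟨by omega, by simp [i]⟩, hch⟩⟩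

theorem exists_walk_lift :
    ∀ (u : α) (q : List α), (u :: q).IsChain EH →
      ∃ W : List (GVt α EH), (.inl (.inl u) :: W).IsChain (GE EH ord) ∧
        gcolor EH ((.inl (.inl u) :: W).getLast (List.cons_ne_nil _ _)) = Color.red ∧
        redCount (gcolor EH) (.inl (.inl u) :: W) = q.length + 2 ∧
        ∀ z ∈ (.inl (.inl u) :: W).dropLast,
          gcolor EH z = Color.blue ∨ ∃ x ∈ u :: q, z = .inl (.inl x)
  | u, [], _ => ⟨[.inl (.inr u)], List.isChain_pair.2 rfl, rfl, by simp [gcolor], by simp⟩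
  | u, v :: q, h => by
    obtain ⟨huv, hq⟩ := List.isChain_cons_cons.1 h
    obtain ⟨c, hc, hcch⟩ := exists_blue_connector (ord := ord) huv
    obtain ⟨W, hch, hlast, hcount, hmem⟩ := exists_walk_lift v q hq
    have hsplit : (.inl (.inl u) :: (c ++ .inl (.inl v) :: W) : List (GVt α EH)) =
        (.inl (.inl u) :: c) ++ (.inl (.inl v) :: W) := rfl
    refine ⟨c ++ .inl (.inl v) :: W, ?_, ?_, ?_, ?_⟩
    · simpa using hcch.append_overlap hch (List.cons_ne_nil _ _)
    · simp only [hsplit, List.getLast_append_of_ne_nil _ (List.cons_ne_nil _ _)]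
      exact hlast
    · have hc0 : redCount (gcolor EH) c = 0 := redCount_eq_zero fun x hx => by simp [hc x hx]
      rw [hsplit, redCount_append, hcount]
      simp [hc0, gcolor]
      omega
    · intro z hz
      rw [hsplit, List.dropLast_append_of_ne_nil (List.cons_ne_nil _ _)] at hz
      rcases List.mem_append.1 hz with hz | hz
      · rcases List.mem_cons.1 hz with rfl | hz
        exacts [.inr ⟨u, List.mem_cons_self, rfl⟩, .inl (hc z hz)]
      · rcases hmem z hz with hz | ⟨x, hx, rfl⟩
        exacts [.inl hz, .inr ⟨x, List.mem_cons_of_mem _ hx, rfl⟩]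

theorem exists_next_orig {u : α} {t : List (GVt α EH)}
    (hch : ((.inl (.inl u) : GVt α EH) :: t).IsChain (GE EH ord))
    (ht : 2 ≤ redCount (gcolor EH) t) :
    ∃ c v t', t = c ++ .inl (.inl v) :: t' ∧ EH u v ∧
      ∀ x ∈ c, gcolor EH x = Color.blue := by
  obtain ⟨y, t, rfl⟩ := List.exists_cons_of_ne_nil (show t ≠ [] by rintro rfl; simp at ht)
  obtain ⟨hy, ht'⟩ := List.isChain_cons_cons.1 hch
  rcases GE_orig_left hy with rfl | ⟨v, huv, rfl | ⟨j, rfl⟩⟩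
  · rw [eq_nil_of_isChain_clone ht'] at ht
    simp [gcolor] at ht
  · exact ⟨[], v, t, rfl, huv, by simp⟩
  · rcases isChain_blue_cons_cases ht' with hblue | ⟨c, d, rfl, hc⟩
    · rw [redCount_cons, redCount_eq_zero fun x hx => by simp [hblue x hx]] at ht
      simp [gcolor] at ht
    · exact ⟨_ :: c, v, d, rfl, huv, List.forall_mem_cons.2 ⟨rfl, hc⟩⟩

theorem exists_chain_of_isChain_orig_cons :
    ∀ (m : ℕ) (u : α) (t : List (GVt α EH)),
      ((.inl (.inl u) : GVt α EH) :: t).IsChain (GE EH ord) →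
      redCount (gcolor EH) (.inl (.inl u) :: t) = m + 2 →
      ∃ q : List α, (u :: q).IsChain EH ∧ q.length = m ∧
        ∀ x ∈ u :: q, (.inl (.inl x) : GVt α EH) ∈ (.inl (.inl u) :: t).dropLast
  | 0, u, t, _, hcount => by
    have ht : t ≠ [] := by rintro rfl; simp [gcolor] at hcount
    exact ⟨[], List.isChain_singleton _, rfl, by simp [List.dropLast_cons_of_ne_nil ht]⟩
  | m + 1, u, t, hch, hcount => by
    have ht : redCount (gcolor EH) t = m + 2 := by simpa [gcolor] using hcount
    obtain ⟨c, v, t', rfl, huv, hc⟩ := exists_next_orig hch (by omega)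
    have hrest : ((.inl (.inl v) : GVt α EH) :: t').IsChain (GE EH ord) :=
      hch.infix ⟨.inl (.inl u) :: c, [], by simp⟩
    have hcount' : redCount (gcolor EH) ((.inl (.inl v) : GVt α EH) :: t') = m + 2 := by
      rwa [redCount_append, redCount_eq_zero fun x hx => by simp [hc x hx], zero_add] at ht
    obtain ⟨q, hq, hlen, hmem⟩ := exists_chain_of_isChain_orig_cons m v t' hrest hcount'
    refine ⟨v :: q, List.isChain_cons_cons.2 ⟨huv, hq⟩, by simp [hlen], ?_⟩
    rw [List.dropLast_cons_of_ne_nil (by simp),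
      List.dropLast_append_of_ne_nil (List.cons_ne_nil _ _)]
    rintro x (_ | ⟨_, hx⟩)
    · exact List.mem_cons_self
    · exact List.mem_cons_of_mem _ (List.mem_append_right _ (hmem x hx))

theorem IntPath.exists_chain (hL : 0 < L) {p : List (GVt α EH)}
    (hp : IntPath (GE EH ord) (gcolor EH) L p) :
    ∃ q : List α, q.IsChain EH ∧ q.length = L ∧
      ∀ x ∈ q, (.inl (.inl x) : GVt α EH) ∈ p.dropLast := by
  obtain ⟨hne, hch, hhead, -, hcount⟩ := hp
  obtain ⟨y, t, rfl⟩ := List.exists_cons_of_ne_nil hne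
  rcases y with (u | u) | y
  · obtain ⟨q, hq, hlen, hmem⟩ := exists_chain_of_isChain_orig_cons (L - 1) u t hch (by omega)
    exact ⟨u :: q, hq, by simp; omega, hmem⟩
  · rw [eq_nil_of_isChain_clone hch] at hcount
    simp [gcolor] at hcount
    omega
  · rcases y with _ | _ <;> simp [gcolor] at hhead


theorem IsBootstrapSolution.image_unblue {S : Finset (GVt α EH)}
    (hS : IsBootstrapSolution (GE EH ord) (gcolor EH) L S) :
    IsBootstrapSolution (GE EH ord) (gcolor EH) L (S.image unblue) :=
  hS.image_of_exists_shorter unblue fun _ hp _ hz hzu => exists_shorter_intPath hp hz hzu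

theorem gcolor_ne_blue_of_mem_image_unblue (T : Finset (GVt α EH)) :
    ∀ z ∈ T.image unblue, gcolor EH z ≠ Color.blue := by
  intro z hz
  obtain ⟨x, -, rfl⟩ := Finset.mem_image.1 hz
  exact gcolor_unblue_ne_blue x

theorem IsBootstrapSolution.exists_mem_orig (hL : 0 < L) {S : Finset (GVt α EH)}
    (hS : IsBootstrapSolution (GE EH ord) (gcolor EH) L S)
    (hblue : ∀ z ∈ S, gcolor EH z ≠ Color.blue) {q : List α} (hq : q.IsChain EH)
    (hlen : q.length = L) : ∃ u ∈ q, (.inl (.inl u) : GVt α EH) ∈ S := by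
  obtain ⟨u, q, rfl⟩ := List.exists_cons_of_ne_nil (List.ne_nil_of_length_pos (hlen ▸ hL))
  obtain ⟨W, hch, hlast, hcount, hmem⟩ := exists_walk_lift (ord := ord) u q hq
  obtain ⟨z, hz, hzS⟩ :=
    hS _ ⟨List.cons_ne_nil _ _, hch, rfl, hlast, by simp at hlen; omega⟩
  rcases hmem z hz with hz | ⟨x, hx, rfl⟩
  exacts [absurd hz (hblue z hzS), ⟨x, hx, hzS⟩]

theorem IsBootstrapSolution.exists_mem_orig_image_unblue (hL : 0 < L)
    {S : Finset (GVt α EH)} (hS : IsBootstrapSolution (GE EH ord) (gcolor EH) L S)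
    {q : List α} (hq : q.IsChain EH) (hlen : q.length = L) :
    ∃ u ∈ q, (.inl (.inl u) : GVt α EH) ∈ S.image unblue :=
  hS.image_unblue.exists_mem_orig hL (gcolor_ne_blue_of_mem_image_unblue S) hq hlen

theorem IsBootstrapSolution.exists_isDVDSolution (hL : 0 < L) {S : Finset (GVt α EH)}
    (hS : IsBootstrapSolution (GE EH ord) (gcolor EH) L S) :
    ∃ D : Finset α, IsDVDSolution EH L D ∧ D.card ≤ S.card := by
  have horig : Function.Injective fun u : α => (.inl (.inl u) : GVt α EH) := by
    intro u v h
    simpa using h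
  refine ⟨(S.image unblue).preimage _ horig.injOn, fun q hq hlen => ?_, ?_⟩
  · simpa using hS.exists_mem_orig_image_unblue hL hq hlen
  · calc _ ≤ (S.image unblue).card :=
          Finset.card_le_card_of_injOn _ (fun u hu => Finset.mem_preimage.1 hu) horig.injOn
      _ ≤ S.card := Finset.card_image_le

theorem IsDVDSolution.isBootstrapSolution_image (hL : 0 < L) {D : Finset α}
    (hD : IsDVDSolution EH L D) :
    IsBootstrapSolution (GE EH ord) (gcolor EH) L (D.image fun u => .inl (.inl u)) := by
  intro p hp
  obtain ⟨q, hq, hlen, hmem⟩ := hp.exists_chain hL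
  obtain ⟨x, hx, hxD⟩ := hD q hq hlen
  exact ⟨_, hmem x hx, Finset.mem_image_of_mem _ hxD⟩

end ReductionGraph

theorem stmt15_general (EH : α → α → Prop) [DecidableRel EH]
    (L : ℕ) (hL : 2 ≤ L)
    (ord : ∀ v : α, Fin (windeg EH v) ≃ {u : α // EH u v})
    (S : Finset (GVt α EH))
    (hfeas : ∀ p : List (GVt α EH), IntPath (GE EH ord) (gcolor EH) L p →
      ∃ z ∈ p.dropLast, z ∈ S) :
    (∃ S' : Finset (GVt α EH),
      (∀ p : List (GVt α EH), IntPath (GE EH ord) (gcolor EH) L p →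
        ∃ z ∈ p.dropLast, z ∈ S') ∧
      S'.card ≤ S.card ∧
      (∀ z ∈ S', gcolor EH z ≠ Color.blue) ∧
      (∀ q : List α, q.Chain' EH → q.length = L →
        ∃ u ∈ q, (Sum.inl (Sum.inl u) : GVt α EH) ∈ S')) ∧
    sInf {n : ℕ | ∃ D : Finset α,
        (∀ q : List α, q.Chain' EH → q.length = L → ∃ u ∈ q, u ∈ D) ∧ D.card = n} =
    sInf {n : ℕ | ∃ T : Finset (GVt α EH),
        (∀ p : List (GVt α EH), IntPath (GE EH ord) (gcolor EH) L p →
          ∃ z ∈ p.dropLast, z ∈ T) ∧ T.card = n} := by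
  have hL0 : 0 < L := by omega
  refine ⟨⟨_, IsBootstrapSolution.image_unblue hfeas, Finset.card_image_le,
    gcolor_ne_blue_of_mem_image_unblue S,
    fun q hq hlen => IsBootstrapSolution.exists_mem_orig_image_unblue hL0 hfeas hq hlen⟩, ?_⟩
  refine Nat.sInf_eq_of_forall_exists_le ?_ ?_
  · rintro _ ⟨D, hD, rfl⟩
    exact ⟨_, ⟨_, IsDVDSolution.isBootstrapSolution_image (ord := ord) hL0 hD, rfl⟩,
      Finset.card_image_le⟩
  · rintro _ ⟨T, hT, rfl⟩
    obtain ⟨D, hD, hcard⟩ := IsBootstrapSolution.exists_isDVDSolution hL0 hT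
    exact ⟨_, ⟨D, hD, rfl⟩, hcard⟩

/-- in the general reduction graph `G`, every feasible bootstrap solution `S`
can be transformed into a feasible bootstrap solution `S'` with `|S'| ≤ |S|` containing no
blue vertex, and then `S' ∩ V_H` is a feasible DVD solution for `(L,H)`; consequently the
optimum of the DVD instance `(L,H)` equals the optimum of the bootstrap instance `(L,G)`
(so the reduction is approximation-preserving). -/
theorem stmt15 (EH : α → α → Prop) [DecidableRel EH]
    (hdag : WellFounded EH) (L : ℕ) (hL : 2 ≤ L)
    (ord : ∀ v : α, Fin (windeg EH v) ≃ {u : α // EH u v})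
    (S : Finset (GVt α EH))
    (hfeas : ∀ p : List (GVt α EH), IntPath (GE EH ord) (gcolor EH) L p →
      ∃ z ∈ p.dropLast, z ∈ S) :
    (∃ S' : Finset (GVt α EH),
      (∀ p : List (GVt α EH), IntPath (GE EH ord) (gcolor EH) L p →
        ∃ z ∈ p.dropLast, z ∈ S') ∧
      S'.card ≤ S.card ∧
      (∀ z ∈ S', gcolor EH z ≠ Color.blue) ∧
      (∀ q : List α, q.Chain' EH → q.length = L →
        ∃ u ∈ q, (Sum.inl (Sum.inl u) : GVt α EH) ∈ S')) ∧
    sInf {n : ℕ | ∃ D : Finset α,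
        (∀ q : List α, q.Chain' EH → q.length = L → ∃ u ∈ q, u ∈ D) ∧ D.card = n} =
    sInf {n : ℕ | ∃ T : Finset (GVt α EH),
        (∀ p : List (GVt α EH), IntPath (GE EH ord) (gcolor EH) L p →
          ∃ z ∈ p.dropLast, z ∈ T) ∧ T.card = n} :=
  stmt15_general EH L hL ord S hfeas
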